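/- Let α ∈ (0,1] and let m ≥ 0 be an integer. Then the Rodrigues-type formula H_m^α(x) = (−α^{−1})^m e^{x^{2α}} T_α^{(m)}(e^{−x^{2α}})(x) holds for all x > 0, where T_α^{(m)} is the m-fold conformable fractional derivative of order α applied to the function x ↦ e^{−x^{2α}}. -/

import Mathlib

/-!
Writing `u = x ^ α`, the chain rule gives `x ^ (1 - α) * d/dx = α * d/du` on functions of `u`,
because `x ^ (1 - α) * (α * x ^ (α - 1)) = α`. Hence `T_α^[m] (e^{-x^{2α}}) = α ^ m (d/du)^m e^{-u²}`,
and the claim reduces to the classical Rodrigues formula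
`d/du (e^{-u²} H_m u) = -e^{-u²} H_{m+1} u`, a consequence of `H_m' = 2 m H_{m-1}`.
-/

/-- The physicists' Hermite polynomials, as real functions:
`H₀ = 1`, `H₁ x = 2 x`, `H_{m+1} x = 2 x * H_m x - 2 m * H_{m-1} x`. -/
noncomputable def hermiteP : ℕ → ℝ → ℝ
  | 0, _ => 1
  | 1, x => 2 * x
  | (m + 2), x => 2 * x * hermiteP (m + 1) x - 2 * ((m : ℝ) + 1) * hermiteP m x

open Filter Topology

-- At `m = 0` the term `hermiteP (0 - 1)` is a junk value, killed by the factor `2 * 0`.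
theorem hermiteP_succ (m : ℕ) (x : ℝ) :
    hermiteP (m + 1) x = 2 * x * hermiteP m x - 2 * m * hermiteP (m - 1) x := by
  cases m <;> simp [hermiteP]

theorem hasDerivAt_hermiteP (m : ℕ) (x : ℝ) :
    HasDerivAt (hermiteP m) (2 * m * hermiteP (m - 1) x) x := by
  induction m using Nat.twoStepInduction generalizing x with
  | zero => simpa [hermiteP] using hasDerivAt_const x (1 : ℝ)
  | one => simpa [hermiteP] using (hasDerivAt_id x).const_mul (2 : ℝ)
  | more k ih₀ ih₁ =>
    have h := (((hasDerivAt_id' x).const_mul (2 : ℝ)).fun_mul (ih₁ x)).fun_sub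
      ((ih₀ x).const_mul (2 * ((k : ℝ) + 1)))
    refine h.congr_deriv ?_
    rw [Nat.add_sub_cancel, show k + 2 - 1 = k + 1 from rfl, hermiteP_succ k x]
    push_cast
    ring

noncomputable def gaussianHermite (m : ℕ) (u : ℝ) : ℝ :=
  Real.exp (-u ^ 2) * hermiteP m u

theorem hasDerivAt_gaussianHermite (m : ℕ) (u : ℝ) :
    HasDerivAt (gaussianHermite m) (-gaussianHermite (m + 1) u) u := by
  have hexp : HasDerivAt (fun u : ℝ => Real.exp (-u ^ 2)) (Real.exp (-u ^ 2) * -(2 * u)) u := by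
    simpa using (hasDerivAt_pow 2 u).neg.exp
  refine (hexp.fun_mul (hasDerivAt_hermiteP m u)).congr_deriv ?_
  simp only [gaussianHermite, hermiteP_succ]
  ring

noncomputable def conformableDeriv (α : ℝ) (f : ℝ → ℝ) : ℝ → ℝ :=
  fun x => x ^ (1 - α) * deriv f x

theorem conformableDeriv_eq_of_eventuallyEq_comp_rpow {α x g' : ℝ} {f g : ℝ → ℝ}
    (hx : 0 < x) (hf : f =ᶠ[𝓝 x] fun y => g (y ^ α)) (hg : HasDerivAt g g' (x ^ α)) :
    conformableDeriv α f x = α * g' := by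
  have hpow : HasDerivAt (fun y : ℝ => y ^ α) (α * x ^ (α - 1)) x :=
    Real.hasDerivAt_rpow_const (Or.inl hx.ne')
  have hcomp : HasDerivAt (fun y => g (y ^ α)) (g' * (α * x ^ (α - 1))) x := hg.comp x hpow
  have hcancel : x ^ (1 - α) * x ^ (α - 1) = 1 := by
    rw [← Real.rpow_add hx]; simp
  rw [conformableDeriv, hf.deriv_eq, hcomp.deriv]
  linear_combination α * g' * hcancel

theorem rpow_two_mul_eq_sq {x : ℝ} (hx : 0 ≤ x) (α : ℝ) : x ^ (2 * α) = (x ^ α) ^ 2 := by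
  rw [mul_comm, Real.rpow_mul hx, Real.rpow_two]

theorem conformableDeriv_iterate_exp_neg_rpow (α : ℝ) (m : ℕ) {x : ℝ} (hx : 0 < x) :
    (conformableDeriv α)^[m] (fun y => Real.exp (-(y ^ (2 * α)))) x
      = (-α) ^ m * gaussianHermite m (x ^ α) := by
  induction m generalizing x with
  | zero => simp [gaussianHermite, hermiteP, rpow_two_mul_eq_sq hx.le]
  | succ m ih =>
    have hf : (conformableDeriv α)^[m] (fun y => Real.exp (-(y ^ (2 * α))))
        =ᶠ[𝓝 x] fun y => (-α) ^ m * gaussianHermite m (y ^ α) :=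
      eventually_of_mem (Ioi_mem_nhds hx) fun y hy => ih hy
    rw [Function.iterate_succ_apply', conformableDeriv_eq_of_eventuallyEq_comp_rpow hx hf
      ((hasDerivAt_gaussianHermite m (x ^ α)).const_mul _)]
    ring

theorem stmt_12 (α : ℝ) (hα : α ∈ Set.Ioc (0:ℝ) 1) (m : ℕ) :
    ∀ x : ℝ, 0 < x →
      hermiteP m (x ^ α)
        = (-α⁻¹) ^ m * Real.exp (x ^ (2 * α)) *
            ((fun f : ℝ → ℝ => fun x => x ^ (1 - α) * deriv f x)^[m]
                (fun x : ℝ => Real.exp (-(x ^ (2 * α))))) x := by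
  intro x hx
  change _ = _ * _ * (conformableDeriv α)^[m] _ x
  rw [conformableDeriv_iterate_exp_neg_rpow α m hx, gaussianHermite, ← rpow_two_mul_eq_sq hx.le]
  set E := x ^ (2 * α)
  have hpow : (-α⁻¹) ^ m * (-α) ^ m = 1 := by
    rw [← mul_pow, neg_mul_neg, inv_mul_cancel₀ hα.1.ne', one_pow]
  have hexp : Real.exp E * Real.exp (-E) = 1 := by
    rw [← Real.exp_add, add_neg_cancel, Real.exp_zero]
  linear_combination
    -(hermiteP m (x ^ α) * Real.exp E * Real.exp (-E)) * hpow - hermiteP m (x ^ α) * hexp
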